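/- arXiv:2512.09305 — 2 statements merged into one kernel-verified Lean document; each statement's English description precedes it below -/
import Mathlib

section
/- Let Z have truncated Gamma density g(z) ∝ z^{n−1} e^{−z} on (ξ, ∞) with ξ ≥ 0 and integer n ≥ 3. Then E[Z^{−2}] is nonincreasing in ξ on [0,∞); in particular E_ξ[Z^{−2}] ≤ E_0[Z^{−2}] = 1/((n−1)(n−2)). -/
/-! With `f z = z ^ (n - 3) * exp (-z)`, the ratio is `∫_ξ^∞ f / ∫_ξ^∞ z² f`, the reciprocal of the
mean of the increasing weight `z²` under the density `f` truncated to `(ξ, ∞)`. Truncating further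
only raises that mean, so the ratio decreases; at `ξ = 0` it is `(n - 3)! / (n - 1)!`. -/

open MeasureTheory Set

lemma div_le_add_div_add_of_le_mul {A B F G t : ℝ} (hA : 0 ≤ A) (hF : 0 ≤ F)
    (hB : B ≤ t * A) (hG : t * F ≤ G) (hG_pos : 0 < G) (hBG_pos : 0 < B + G) :
    F / G ≤ (A + F) / (B + G) := by
  rw [div_le_div_iff₀ hG_pos hBG_pos]
  nlinarith [mul_le_mul_of_nonneg_left hB hF, mul_le_mul_of_nonneg_left hG hA]

/-- On `Ioi a = Ioc a b ∪ Ioi b` the weight `w` is at most `w b` on the first piece and at least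
`w b` on the second. -/
theorem antitoneOn_integral_Ioi_div_integral_Ioi_mul {f w : ℝ → ℝ} {c : ℝ}
    (hf : IntegrableOn f (Ioi c)) (hwf : IntegrableOn (fun z => w z * f z) (Ioi c))
    (hf_nonneg : ∀ z ∈ Ioi c, 0 ≤ f z) (hw : MonotoneOn w (Ici c))
    (hpos : ∀ ξ ∈ Ici c, 0 < ∫ z in Ioi ξ, w z * f z) :
    AntitoneOn (fun ξ => (∫ z in Ioi ξ, f z) / ∫ z in Ioi ξ, w z * f z) (Ici c) := by
  intro a ha b hb hab
  have hIoi : ∀ {ξ}, ξ ∈ Ici c → Ioi ξ ⊆ Ioi c := fun hξ => Ioi_subset_Ioi hξ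
  have hIoc : Ioc a b ⊆ Ioi c := Ioc_subset_Ioi_self.trans (hIoi ha)
  have hsplit : ∀ g : ℝ → ℝ, IntegrableOn g (Ioi c) →
      ∫ z in Ioi a, g z = (∫ z in Ioc a b, g z) + ∫ z in Ioi b, g z := fun g hg => by
    rw [← Ioc_union_Ioi_eq_Ioi hab, setIntegral_union (Ioc_disjoint_Ioi le_rfl) measurableSet_Ioi
      (hg.mono_set hIoc) (hg.mono_set (hIoi hb))]
  have hlow : ∫ z in Ioc a b, w z * f z ≤ w b * ∫ z in Ioc a b, f z := by
    rw [← integral_const_mul]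
    refine setIntegral_mono_on (hwf.mono_set hIoc) ((hf.mono_set hIoc).const_mul _)
      measurableSet_Ioc fun z hz => mul_le_mul_of_nonneg_right ?_ (hf_nonneg z (hIoc hz))
    exact hw (mem_Ici.2 (ha.trans hz.1.le)) hb hz.2
  have hhigh : w b * ∫ z in Ioi b, f z ≤ ∫ z in Ioi b, w z * f z := by
    rw [← integral_const_mul]
    refine setIntegral_mono_on ((hf.mono_set (hIoi hb)).const_mul _) (hwf.mono_set (hIoi hb))
      measurableSet_Ioi fun z hz => mul_le_mul_of_nonneg_right ?_ (hf_nonneg z (hIoi hb hz))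
    exact hw hb (mem_Ici.2 (hb.trans hz.le)) hz.le
  have hpos_a := hpos a ha
  rw [hsplit _ hwf] at hpos_a
  dsimp only
  rw [hsplit f hf, hsplit _ hwf]
  exact div_le_add_div_add_of_le_mul
    (setIntegral_nonneg measurableSet_Ioc fun z hz => hf_nonneg z (hIoc hz))
    (setIntegral_nonneg measurableSet_Ioi fun z hz => hf_nonneg z (hIoi hb hz))
    hlow hhigh (hpos b hb) hpos_a

lemma integral_pow_mul_exp_neg_Ioi_zero (k : ℕ) :
    ∫ z in Ioi (0 : ℝ), z ^ k * Real.exp (-z) = k.factorial := by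
  rw [← Real.Gamma_nat_eq_factorial, Real.Gamma_eq_integral (by positivity)]
  refine setIntegral_congr_fun measurableSet_Ioi fun z _ => ?_
  rw [add_sub_cancel_right, Real.rpow_natCast, mul_comm]

lemma integrableOn_pow_mul_exp_neg_Ioi_zero (k : ℕ) :
    IntegrableOn (fun z : ℝ => z ^ k * Real.exp (-z)) (Ioi 0) := by
  refine (Real.GammaIntegral_convergent (s := k + 1) (by positivity)).congr_fun
    (fun z _ => ?_) measurableSet_Ioi
  dsimp only
  rw [add_sub_cancel_right, Real.rpow_natCast, mul_comm]

lemma integral_pow_mul_exp_neg_Ioi_pos (k : ℕ) {ξ : ℝ} (hξ : 0 ≤ ξ) :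
    0 < ∫ z in Ioi ξ, z ^ k * Real.exp (-z) := by
  have hpos : ∀ z ∈ Ioi ξ, 0 < z ^ k * Real.exp (-z) := fun z hz =>
    have : 0 < z := hξ.trans_lt hz
    by positivity
  rw [setIntegral_pos_iff_support_of_nonneg_ae
    ((ae_restrict_mem measurableSet_Ioi).mono fun z hz => (hpos z hz).le)
    ((integrableOn_pow_mul_exp_neg_Ioi_zero k).mono_set (Ioi_subset_Ioi hξ))]
  calc (0 : ENNReal) < volume (Ioi ξ) := by simp
    _ ≤ volume (Function.support (fun z : ℝ => z ^ k * Real.exp (-z)) ∩ Ioi ξ) :=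
      measure_mono fun z hz => ⟨(hpos z hz).ne', hz⟩

theorem stmt4 (n : ℕ) (hn : 3 ≤ n) :
    let E : ℝ → ℝ := fun ξ =>
      (∫ z in Ioi ξ, z ^ (n - 3) * Real.exp (-z)) /
        (∫ z in Ioi ξ, z ^ (n - 1) * Real.exp (-z))
    AntitoneOn E (Ici 0) ∧
      (∀ ξ : ℝ, 0 ≤ ξ → E ξ ≤ 1 / (((n : ℝ) - 1) * ((n : ℝ) - 2))) ∧
      E 0 = 1 / (((n : ℝ) - 1) * ((n : ℝ) - 2)) := by
  obtain ⟨m, rfl⟩ : ∃ m, n = m + 3 := ⟨n - 3, by omega⟩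
  intro E
  have hE : E = fun ξ => (∫ z in Ioi ξ, z ^ m * Real.exp (-z)) /
      ∫ z in Ioi ξ, z ^ 2 * (z ^ m * Real.exp (-z)) := by
    simp only [E, show m + 3 - 1 = 2 + m by omega, Nat.add_sub_cancel, pow_add, mul_assoc]
  have hanti : AntitoneOn E (Ici 0) := by
    rw [hE]
    refine antitoneOn_integral_Ioi_div_integral_Ioi_mul
      (integrableOn_pow_mul_exp_neg_Ioi_zero m) ?_ (fun z (hz : 0 < z) => by positivity)
      (fun x hx y _ hxy => pow_le_pow_left₀ hx hxy 2) fun ξ hξ => ?_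
    · simpa only [← mul_assoc, ← pow_add, add_comm] using
        integrableOn_pow_mul_exp_neg_Ioi_zero (m + 2)
    · simpa only [← mul_assoc, ← pow_add, add_comm] using
        integral_pow_mul_exp_neg_Ioi_pos (m + 2) hξ
  have hE0 : E 0 = 1 / ((((m + 3 : ℕ) : ℝ) - 1) * (((m + 3 : ℕ) : ℝ) - 2)) := by
    simp only [E, show m + 3 - 1 = m + 2 by omega, Nat.add_sub_cancel,
      integral_pow_mul_exp_neg_Ioi_zero, Nat.factorial_succ]
    push_cast
    rw [show (m : ℝ) + 3 - 1 = m + 1 + 1 by ring, show (m : ℝ) + 3 - 2 = m + 1 by ring]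
    field_simp
  exact ⟨hanti, fun ξ hξ => hE0 ▸ hanti self_mem_Ici hξ hξ, hE0⟩
end

section
/- Let H be a probability measure on (0,∞) and ρ ≤ 0, c > 0. Then ∫ τ e^{cρτ} dH(τ) / ∫ τ^{−1} e^{cρτ} dH(τ) ≤ ∫ τ dH(τ) / ∫ τ^{−1} dH(τ), assuming all integrals are finite and positive. -/
/-!
Symmetrize over two independent copies `x, y` of `τ`: the difference of the two sides of the
cross-multiplied inequality is the integral of `(x/y - y/x) (e^{cρx} - e^{cρy})` against `H ⊗ H`,
and this integrand is pointwise nonpositive because `x/y - y/x` has the sign of `x - y` while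
`τ ↦ e^{cρτ}` is nonincreasing.
-/

open MeasureTheory Set

/-- A weighted form of Chebyshev's integral inequality. -/
theorem integral_mul_mul_integral_le {α : Type*} [MeasurableSpace α] {μ : Measure α}
    [SigmaFinite μ] {u v w : α → ℝ} (hu : Integrable u μ) (hv : Integrable v μ)
    (huw : Integrable (fun x => u x * w x) μ) (hvw : Integrable (fun x => v x * w x) μ)
    (hopp : ∀ᵐ z ∂μ.prod μ, (u z.1 * v z.2 - u z.2 * v z.1) * (w z.1 - w z.2) ≤ 0) :
    (∫ x, u x * w x ∂μ) * ∫ x, v x ∂μ ≤ (∫ x, u x ∂μ) * ∫ x, v x * w x ∂μ := by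
  set D : α × α → ℝ := fun z => u z.1 * w z.1 * v z.2 - u z.1 * (v z.2 * w z.2)
  have hL : Integrable (fun z : α × α => u z.1 * w z.1 * v z.2) (μ.prod μ) := huw.mul_prod hv
  have hR : Integrable (fun z : α × α => u z.1 * (v z.2 * w z.2)) (μ.prod μ) := hu.mul_prod hvw
  have hD : Integrable D (μ.prod μ) := hL.sub hR
  -- `D` and `D ∘ Prod.swap` have the same integral, and their sum is the integrand of `hopp`.
  have htwice : 2 * ∫ z, D z ∂μ.prod μ
      = ∫ z, (u z.1 * v z.2 - u z.2 * v z.1) * (w z.1 - w z.2) ∂μ.prod μ := by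
    rw [two_mul]
    nth_rw 2 [← integral_prod_swap D]
    rw [← integral_add hD (hD.swap : Integrable (fun z => D z.swap) _)]
    congr 1 with z
    simp only [D, Prod.fst_swap, Prod.snd_swap]
    ring
  have hnonpos : ∫ z, D z ∂μ.prod μ ≤ 0 := by
    linarith [integral_nonpos_of_ae hopp]
  rwa [integral_sub hL hR, sub_nonpos, integral_prod_mul (fun x => u x * w x) v,
    integral_prod_mul u (fun x => v x * w x)] at hnonpos

theorem mul_inv_sub_mul_inv_mul_sub_nonpos {f : ℝ → ℝ} (hf : AntitoneOn f (Ioi 0)) {x y : ℝ}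
    (hx : 0 < x) (hy : 0 < y) : (x * y⁻¹ - y * x⁻¹) * (f x - f y) ≤ 0 := by
  have hopp : (x - y) * (f x - f y) ≤ 0 := by
    rcases le_total x y with hxy | hyx
    · exact mul_nonpos_of_nonpos_of_nonneg (sub_nonpos.2 hxy) (sub_nonneg.2 (hf hx hy hxy))
    · exact mul_nonpos_of_nonneg_of_nonpos (sub_nonneg.2 hyx) (sub_nonpos.2 (hf hy hx hyx))
  have hfactor : x * y⁻¹ - y * x⁻¹ = (x + y) / (x * y) * (x - y) := by
    field_simp
    ring
  rw [hfactor, mul_assoc]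
  exact mul_nonpos_of_nonneg_of_nonpos (by positivity) hopp

theorem stmt6 (H : Measure ℝ) [IsProbabilityMeasure H]
    (hpos : ∀ᵐ τ ∂H, 0 < τ) (ρ c : ℝ) (hρ : ρ ≤ 0) (hc : 0 < c)
    (h1 : Integrable (fun τ => τ) H)
    (h2 : Integrable (fun τ => τ⁻¹) H)
    (h3 : Integrable (fun τ => τ * Real.exp (c * ρ * τ)) H)
    (h4 : Integrable (fun τ => τ⁻¹ * Real.exp (c * ρ * τ)) H)
    (hd0 : 0 < ∫ τ, τ⁻¹ ∂H)
    (hdk : 0 < ∫ τ, τ⁻¹ * Real.exp (c * ρ * τ) ∂H) :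
    (∫ τ, τ * Real.exp (c * ρ * τ) ∂H) /
        (∫ τ, τ⁻¹ * Real.exp (c * ρ * τ) ∂H) ≤
      (∫ τ, τ ∂H) / (∫ τ, τ⁻¹ ∂H) := by
  have hanti : Antitone fun τ => Real.exp (c * ρ * τ) := fun x y hxy =>
    Real.exp_le_exp.2 (mul_le_mul_of_nonpos_left hxy (mul_nonpos_of_nonneg_of_nonpos hc.le hρ))
  have hpos₂ : ∀ᵐ z ∂H.prod H, 0 < z.1 ∧ 0 < z.2 :=
    (Measure.quasiMeasurePreserving_fst.ae hpos).and (Measure.quasiMeasurePreserving_snd.ae hpos)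
  rw [div_le_div_iff₀ hdk hd0]
  exact integral_mul_mul_integral_le h1 h2 h3 h4 <| hpos₂.mono fun z hz =>
    mul_inv_sub_mul_inv_mul_sub_nonpos (hanti.antitoneOn _) hz.1 hz.2
end
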